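/- Let ξ be a countable ordinal, M an infinite subset of ℕ, and ℒ a ξ-uniform family on M. Then for every infinite subset L of M, (ℒ_*)^ξ_L = {∅} and s_L(ℒ_*) = ξ + 1. -/

import Mathlib

open Ordinal Filter Set

/-- `FinLT s t` : every element of `s` is smaller than every element of `t`
(i.e. `max s < min t`, vacuously true if one of them is empty). -/
def FinLT (s t : Finset ℕ) : Prop := ∀ a ∈ s, ∀ b ∈ t, a < b

/-- `s` is an initial segment of `t`  (`s ⪯ t`). -/
def InitSeg (s t : Finset ℕ) : Prop :=
  s ⊆ t ∧ ∀ a ∈ t, ∀ b ∈ s, a ≤ b → a ∈ s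

/-- `s` is a proper initial segment of `t`  (`s ≺ t`). -/
def PInitSeg (s t : Finset ℕ) : Prop := InitSeg s t ∧ s ≠ t

/-- `[M]^{<ω}` : the finite subsets of `M`. -/
def FinSubs (M : Set ℕ) : Set (Finset ℕ) := {s | ↑s ⊆ M}

/-- `ℒ(m) = {s : {m} ∪ s ∈ ℒ and {m} < s}`. -/
def famAt (L : Set (Finset ℕ)) (m : ℕ) : Set (Finset ℕ) :=
  {s | insert m s ∈ L ∧ ∀ a ∈ s, m < a}

/-- `ℒ*` : the family of initial segments of elements of `ℒ`. -/
def famStar (L : Set (Finset ℕ)) : Set (Finset ℕ) := {t | ∃ s ∈ L, InitSeg t s}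

/-- `ℒ_*` : the family of subsets of elements of `ℒ`. -/
def famSub (L : Set (Finset ℕ)) : Set (Finset ℕ) := {t | ∃ s ∈ L, t ⊆ s}

/-- A family is Sperner if no element is a proper subset of another. -/
def Sperner (L : Set (Finset ℕ)) : Prop := ¬ ∃ s ∈ L, ∃ t ∈ L, s ⊂ t

/-- A family is hereditary if it is closed under taking subsets. -/
def Hereditary (F : Set (Finset ℕ)) : Prop := ∀ s ∈ F, ∀ t ⊆ s, t ∈ F

/-- `IsUniform ξ ℒ M` : `ℒ` is a `ξ`-uniform family on `M`. -/
inductive IsUniform : Ordinal.{0} → Set (Finset ℕ) → Set ℕ → Prop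
  | zero (M : Set ℕ) : IsUniform 0 {(∅ : Finset ℕ)} M
  | succ (ζ : Ordinal.{0}) (L : Set (Finset ℕ)) (M : Set ℕ)
      (hsub : L ⊆ FinSubs M) (hne : (∅ : Finset ℕ) ∉ L)
      (h : ∀ m ∈ M, IsUniform ζ (famAt L m) (M ∩ Set.Ioi m)) :
      IsUniform (ζ + 1) L M
  | limit (ξ : Ordinal.{0}) (L : Set (Finset ℕ)) (M : Set ℕ)
      (hlim : Order.IsSuccLimit ξ)
      (hsub : L ⊆ FinSubs M) (hne : (∅ : Finset ℕ) ∉ L)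
      (ξm : ℕ → Ordinal.{0})
      (hmono : ∀ m ∈ M, ∀ n ∈ M, m < n → ξm m < ξm n)
      (hlt : ∀ m ∈ M, ξm m < ξ)
      (hsup : ∀ β < ξ, ∃ m ∈ M, β ≤ ξm m)
      (h : ∀ m ∈ M, IsUniform (ξm m) (famAt L m) (M ∩ Set.Ioi m)) :
      IsUniform ξ L M

/-- The characteristic function of a finite set, as an element of the
product space `ℕ → Bool` (i.e. `2^ℕ`). -/
def toChar (s : Finset ℕ) : ℕ → Bool := fun n => decide (n ∈ s)

/-- A family of finite subsets of `ℕ` is pointwise closed if its image in `2^ℕ`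
(under characteristic functions) is closed in the product topology. -/
def PtwiseClosed (F : Set (Finset ℕ)) : Prop := IsClosed (toChar '' F)

/-- The first strong Cantor--Bendixson derivative of `F` on `M`:
the set of `A ∈ F ∩ [M]^{<ω}` such that `A` is a cluster point (in `2^ℕ`) of
`{B ∈ F : B ⊆ A ∪ L}` for every infinite `L ⊆ M`. -/
def derivOne (M : Set ℕ) (F : Set (Finset ℕ)) : Set (Finset ℕ) :=
  {A | A ∈ F ∧ ↑A ⊆ M ∧ ∀ L : Set ℕ, L ⊆ M → L.Infinite →
    AccPt (toChar A) (𝓟 (toChar '' {B | B ∈ F ∧ ↑B ⊆ ↑A ∪ L}))}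

/-- The iterated strong Cantor--Bendixson derivatives `(F)^ξ_M`. -/
noncomputable def CBDeriv (F : Set (Finset ℕ)) (M : Set ℕ) (o : Ordinal.{0}) :
    Set (Finset ℕ) :=
  Ordinal.limitRecOn o F (fun _ ih => derivOne M ih)
    (fun o _ ih => ⋂ (β : Ordinal.{0}) (h : β < o), ih β h)

/-- The strong Cantor--Bendixson index `s_M(F)` : the least ordinal `ξ`
with `(F)^ξ_M = ∅`. -/
noncomputable def CBIndex (F : Set (Finset ℕ)) (M : Set ℕ) : Ordinal.{0} :=
  sInf {o : Ordinal.{0} | CBDeriv F M o = ∅}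

/-!
A finite set `A` is assigned the ranks of the uniform families reached from `ℒ` by descending
along an increasing path through `A`, i.e. by passing to `ℒ(m)` at each element `m` of the path
(path elements outside `A` are skipped). Then `A ∈ (ℒ_*)^β_L` exactly when `A ⊆ L` and such a
residual family has rank at least `β`. A residual of rank `> β` has children of rank `≥ β` at
cofinally many `x` of any infinite `N`, so `A` is a limit of the sets `A ∪ {x}`; conversely, if
`A` is a limit of sets `B` of rank `≥ β`, cutting a path of such a `B ⊋ A` just above `max A`
leaves a residual of rank `> β`. At limit stages one uses that the path starts at one of the
finitely many `m ≤ min A`. Since ranks drop strictly along nonempty paths and the rank of a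
uniform family is unique, only `∅` reaches rank `ξ`, and nothing reaches `ξ + 1`.
-/

open Topology

theorem Set.Infinite.inter_Ioi {α : Type*} [LinearOrder α] [LocallyFiniteOrderBot α]
    {s : Set α} (hs : s.Infinite) (a : α) : (s ∩ Ioi a).Infinite := by
  rw [← sdiff_compl, compl_Ioi]
  exact hs.sdiff (finite_Iic a)

theorem exists_mem_forall_lt_of_antitone {ι α : Type*} [LinearOrder α] [OrderBot α]
    {S : Finset ι} {P : ι → α → Prop} (hP : ∀ i, Antitone (P i)) {β : α} (hβ : ⊥ < β)
    (h : ∀ γ < β, ∃ i ∈ S, P i γ) : ∃ i ∈ S, ∀ γ < β, P i γ := by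
  by_contra! hne
  choose f hfβ hf using hne
  let γ := S.attach.sup fun i => f i.1 i.2
  obtain ⟨i, hi, hPi⟩ := h γ ((Finset.sup_lt_iff hβ).2 fun i _ => hfβ i.1 i.2)
  exact hf i hi (hP i (Finset.le_sup (f := fun i : S => f i.1 i.2) (S.mem_attach ⟨i, hi⟩)) hPi)

theorem toChar_injective : Function.Injective toChar := fun s t h =>
  Finset.ext fun n => by simpa [toChar] using congrFun h n

theorem cylinder_mem_nhds (x : ℕ → Bool) (n : ℕ) : {y : ℕ → Bool | ∀ i < n, y i = x i} ∈ 𝓝 x :=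
  (Filter.eventually_all_finite (finite_Iio n)).2 fun i _ =>
    (continuous_apply i).continuousAt ((isOpen_discrete {x i}).mem_nhds rfl)

theorem exists_cylinder_subset {x : ℕ → Bool} {U : Set (ℕ → Bool)} (hU : U ∈ 𝓝 x) :
    ∃ n, {y : ℕ → Bool | ∀ i < n, y i = x i} ⊆ U := by
  rw [nhds_pi, Filter.mem_pi] at hU
  obtain ⟨I, hI, t, ht, hsub⟩ := hU
  obtain ⟨n, hn⟩ := hI.bddAbove
  exact ⟨n + 1, fun y hy => hsub fun i hi =>
    (hy i (Nat.lt_succ_of_le (hn hi))).symm ▸ mem_of_mem_nhds (ht i)⟩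

theorem accPt_toChar_iff {A : Finset ℕ} {S : Set (Finset ℕ)} :
    AccPt (toChar A) (𝓟 (toChar '' S)) ↔ ∀ n, ∃ B ∈ S, B ≠ A ∧ ∀ i < n, (i ∈ B ↔ i ∈ A) := by
  rw [accPt_iff_nhds]
  constructor
  · intro h n
    obtain ⟨_, ⟨hy, B, hB, rfl⟩, hne⟩ := h _ (cylinder_mem_nhds (toChar A) n)
    exact ⟨B, hB, fun e => hne (e ▸ rfl), fun i hi => by simpa [toChar] using hy i hi⟩
  · intro h U hU
    obtain ⟨n, hn⟩ := exists_cylinder_subset hU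
    obtain ⟨B, hB, hne, hagree⟩ := h n
    exact ⟨toChar B, ⟨hn fun i hi => by simp [toChar, hagree i hi], B, hB, rfl⟩,
      toChar_injective.ne hne⟩

section Uniform

variable {ξ : Ordinal.{0}} {𝓛 : Set (Finset ℕ)} {M : Set ℕ}

theorem IsUniform.subset (h : IsUniform ξ 𝓛 M) {s : Finset ℕ} (hs : s ∈ 𝓛) : ↑s ⊆ M := by
  cases h with
  | zero => simp_all
  | succ _ _ _ hsub | limit _ _ _ _ hsub => exact hsub hs

theorem IsUniform.nonempty (h : IsUniform ξ 𝓛 M) (hM : M.Infinite) : 𝓛.Nonempty := by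
  induction h with
  | zero => exact ⟨∅, rfl⟩
  | succ _ _ M _ _ _ ih | limit _ _ M _ _ _ _ _ _ _ _ ih =>
    obtain ⟨m, hm⟩ := hM.nonempty
    obtain ⟨u, hu⟩ := ih m hm (hM.inter_Ioi m)
    exact ⟨insert m u, hu.1⟩

theorem IsUniform.famAt_isUniform (h : IsUniform ξ 𝓛 M) {m : ℕ} (hm : m ∈ M)
    (hne : (famAt 𝓛 m).Nonempty) : ∃ δ < ξ, IsUniform δ (famAt 𝓛 m) (M ∩ Ioi m) := by
  cases h with
  | zero => simp [famAt] at hne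
  | succ ζ _ _ _ _ h => exact ⟨ζ, lt_add_one ζ, h m hm⟩
  | limit _ _ _ _ _ _ ξm _ hlt _ h => exact ⟨ξm m, hlt m hm, h m hm⟩

theorem IsUniform.exists_famAt_ge (h : IsUniform ξ 𝓛 M) {β : Ordinal.{0}} (hβ : β < ξ)
    {N : Set ℕ} (hN : N ⊆ M) (hNinf : N.Infinite) (n : ℕ) :
    ∃ x ∈ N, n < x ∧ ∃ δ, β ≤ δ ∧ IsUniform δ (famAt 𝓛 x) (M ∩ Ioi x) := by
  cases h with
  | zero => exact absurd hβ zero_le.not_gt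
  | succ ζ _ _ _ _ h =>
    obtain ⟨x, hx, hnx⟩ := hNinf.exists_gt n
    exact ⟨x, hx, hnx, ζ, Order.lt_add_one_iff.1 hβ, h x (hN hx)⟩
  | limit _ _ _ _ _ _ ξm hmono _ hsup h =>
    obtain ⟨m, hm, hβm⟩ := hsup β hβ
    obtain ⟨x, hx, hx'⟩ := hNinf.exists_gt (max n m)
    exact ⟨x, hx, (le_max_left n m).trans_lt hx', ξm x,
      hβm.trans (hmono m hm x (hN hx) ((le_max_right n m).trans_lt hx')).le, h x (hN hx)⟩

/-- Successor ranks have all children of the same rank, limit ranks have children of strictly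
increasing rank. -/
theorem IsUniform.rank_unique {ξ' : Ordinal.{0}} (h : IsUniform ξ 𝓛 M) (h' : IsUniform ξ' 𝓛 M)
    (hM : M.Infinite) : ξ = ξ' := by
  induction h generalizing ξ' with
  | zero => cases h' <;> simp_all
  | succ ζ 𝓛 M _ hne _ ih =>
    obtain ⟨m, hm⟩ := hM.nonempty
    obtain ⟨m', hm', hmm'⟩ := hM.exists_gt m
    cases h' with
    | zero => exact absurd rfl hne
    | succ _ _ _ _ _ h' => rw [ih m hm (h' m hm) (hM.inter_Ioi m)]
    | limit _ _ _ _ _ _ ξm hmono _ _ h' =>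
      have := hmono m hm m' hm' hmm'
      rw [← ih m hm (h' m hm) (hM.inter_Ioi m), ← ih m' hm' (h' m' hm') (hM.inter_Ioi m')] at this
      exact absurd this (lt_irrefl ζ)
  | limit ξ 𝓛 M _ _ hne ξm hmono hlt hsup _ ih =>
    obtain ⟨m, hm⟩ := hM.nonempty
    obtain ⟨m', hm', hmm'⟩ := hM.exists_gt m
    cases h' with
    | zero => exact absurd rfl hne
    | succ ζ _ _ _ _ h' =>
      have := hmono m hm m' hm' hmm'
      rw [ih m hm (h' m hm) (hM.inter_Ioi m), ih m' hm' (h' m' hm') (hM.inter_Ioi m')] at this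
      exact absurd this (lt_irrefl ζ)
    | limit _ _ _ _ _ _ ξm' _ hlt' hsup' h' =>
      have heq : ∀ m ∈ M, ξm m = ξm' m := fun m hm => ih m hm (h' m hm) (hM.inter_Ioi m)
      refine eq_of_forall_lt_iff fun β => ⟨fun hβ => ?_, fun hβ => ?_⟩
      · obtain ⟨m, hm, hβm⟩ := hsup β hβ
        exact hβm.trans_lt (heq m hm ▸ hlt' m hm)
      · obtain ⟨m, hm, hβm⟩ := hsup' β hβ
        exact hβm.trans_lt (heq m hm ▸ hlt m hm)

end Uniform

/-- `Residual 𝓛 M A 𝓡 M'`: `𝓡` on `M'` is obtained from `𝓛` on `M` by passing to `famAt · m`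
along an increasing path `m₁ < m₂ < ⋯ < mₖ` of elements of the successive ground sets, and `A` is
a subset of the path (path elements outside `A` are skipped over). -/
inductive Residual : Set (Finset ℕ) → Set ℕ → Finset ℕ → Set (Finset ℕ) → Set ℕ → Prop
  | refl (𝓛 : Set (Finset ℕ)) (M : Set ℕ) : Residual 𝓛 M ∅ 𝓛 M
  | step {𝓛 : Set (Finset ℕ)} {M : Set ℕ} {A : Finset ℕ} {𝓡 : Set (Finset ℕ)} {M' : Set ℕ}
      (m : ℕ) (hm : m ∈ M) (hA : ∀ a ∈ A, m ≤ a)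
      (h : Residual (famAt 𝓛 m) (M ∩ Ioi m) (A.erase m) 𝓡 M') : Residual 𝓛 M A 𝓡 M'

namespace Residual

variable {ξ γ : Ordinal.{0}} {𝓛 𝓡 : Set (Finset ℕ)} {M M' : Set ℕ} {A : Finset ℕ}

theorem ground_subset (h : Residual 𝓛 M A 𝓡 M') : M' ⊆ M := by
  induction h with
  | refl => exact subset_rfl
  | step _ _ _ _ ih => exact ih.trans inter_subset_left

theorem exists_inter_Ioi_subset (h : Residual 𝓛 M A 𝓡 M') : ∃ a, M ∩ Ioi a ⊆ M' := by
  induction h with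
  | refl => exact ⟨0, inter_subset_left⟩
  | step m _ _ _ ih =>
    obtain ⟨a, ha⟩ := ih
    exact ⟨max m a, fun x ⟨hx, hxa⟩ =>
      ha ⟨⟨hx, (le_max_left m a).trans_lt hxa⟩, (le_max_right m a).trans_lt hxa⟩⟩

theorem ground_infinite (h : Residual 𝓛 M A 𝓡 M') (hM : M.Infinite) : M'.Infinite :=
  let ⟨a, ha⟩ := h.exists_inter_Ioi_subset
  (hM.inter_Ioi a).mono ha

theorem mem_famSub (h : Residual 𝓛 M A 𝓡 M') (hne : 𝓡.Nonempty) : A ∈ famSub 𝓛 := by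
  induction h with
  | refl =>
    obtain ⟨s, hs⟩ := hne
    exact ⟨s, hs, s.empty_subset⟩
  | step m _ _ _ ih =>
    obtain ⟨u, hu, hAu⟩ := ih hne
    exact ⟨insert m u, hu.1, Finset.subset_insert_iff.2 hAu⟩

theorem exists_isUniform (h : Residual 𝓛 M A 𝓡 M') (h𝓛 : IsUniform ξ 𝓛 M) (hne : 𝓡.Nonempty) :
    ∃ γ ≤ ξ, IsUniform γ 𝓡 M' ∧ (A.Nonempty → γ < ξ) := by
  induction h generalizing ξ with
  | refl => exact ⟨ξ, le_rfl, h𝓛, fun hA => absurd hA Finset.not_nonempty_empty⟩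
  | step m hm _ h ih =>
    obtain ⟨s, hs, -⟩ := h.mem_famSub hne
    obtain ⟨δ, hδ, hu⟩ := h𝓛.famAt_isUniform hm ⟨s, hs⟩
    obtain ⟨γ, hγ, hu', -⟩ := ih hu hne
    exact ⟨γ, hγ.trans hδ.le, hu', fun _ => hγ.trans_lt hδ⟩

theorem rank_le (h : Residual 𝓛 M A 𝓡 M') (h𝓛 : IsUniform ξ 𝓛 M) (h𝓡 : IsUniform γ 𝓡 M')
    (hM' : M'.Infinite) : γ ≤ ξ ∧ (A.Nonempty → γ < ξ) := by
  obtain ⟨γ', hγ', hu, hlt⟩ := h.exists_isUniform h𝓛 (h𝓡.nonempty hM')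
  rw [h𝓡.rank_unique hu hM']
  exact ⟨hγ', hlt⟩

theorem split (h : Residual 𝓛 M A 𝓡 M') (k : ℕ) :
    ∃ 𝓢 M₀, Residual 𝓛 M (A.filter (· < k)) 𝓢 M₀ ∧ Residual 𝓢 M₀ (A.filter (k ≤ ·)) 𝓡 M' := by
  induction h with
  | refl 𝓛 M => exact ⟨𝓛, M, by simpa using refl 𝓛 M, by simpa using refl 𝓛 M⟩
  | @step 𝓛 M A 𝓡 M' m hm hA h ih =>
    by_cases hk : k ≤ m
    · refine ⟨𝓛, M, ?_, ?_⟩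
      · rw [Finset.filter_false_of_mem fun a ha => not_lt.2 (hk.trans (hA a ha))]
        exact refl 𝓛 M
      · rw [Finset.filter_true_of_mem fun a ha => hk.trans (hA a ha)]
        exact step m hm hA h
    · obtain ⟨𝓢, M₀, h₁, h₂⟩ := ih
      refine ⟨𝓢, M₀, step m hm (fun a ha => hA a (Finset.mem_filter.1 ha).1) ?_, ?_⟩
      · rwa [← Finset.filter_erase]
      · have hmA : m ∉ A.filter (k ≤ ·) := fun h => hk (Finset.mem_filter.1 h).2
        rwa [Finset.filter_erase, Finset.erase_eq_of_notMem hmA] at h₂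

theorem snoc (h : Residual 𝓛 M A 𝓡 M') {x : ℕ} (hx : x ∈ M') :
    Residual 𝓛 M (insert x A) (famAt 𝓡 x) (M' ∩ Ioi x) := by
  induction h with
  | refl 𝓛 M => exact step x hx (by simp) (by simpa using refl _ _)
  | step m hm hA h ih =>
    have hmx : m < x := (h.ground_subset hx).2
    refine step m hm (Finset.forall_mem_insert _ _ _ |>.2 ⟨hmx.le, hA⟩) ?_
    rw [Finset.erase_insert_of_ne hmx.ne']
    exact ih hx

end Residual

def RankGE (𝓛 : Set (Finset ℕ)) (M : Set ℕ) (A : Finset ℕ) (β : Ordinal.{0}) : Prop :=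
  ∃ (𝓡 : Set (Finset ℕ)) (M' : Set ℕ) (γ : Ordinal.{0}),
    Residual 𝓛 M A 𝓡 M' ∧ IsUniform γ 𝓡 M' ∧ β ≤ γ

namespace RankGE

variable {ξ β β' : Ordinal.{0}} {𝓛 : Set (Finset ℕ)} {M : Set ℕ} {A : Finset ℕ}

theorem mono (h : RankGE 𝓛 M A β) (hle : β' ≤ β) : RankGE 𝓛 M A β' :=
  let ⟨𝓡, M', γ, hres, hu, hβγ⟩ := h
  ⟨𝓡, M', γ, hres, hu, hle.trans hβγ⟩

theorem mem_famSub (h : RankGE 𝓛 M A β) (hM : M.Infinite) : A ∈ famSub 𝓛 :=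
  let ⟨_, _, _, hres, hu, _⟩ := h
  hres.mem_famSub (hu.nonempty (hres.ground_infinite hM))

theorem le_rank (h : RankGE 𝓛 M A β) (h𝓛 : IsUniform ξ 𝓛 M) (hM : M.Infinite) : β ≤ ξ :=
  let ⟨_, _, _, hres, hu, hβγ⟩ := h
  hβγ.trans (hres.rank_le h𝓛 hu (hres.ground_infinite hM)).1

theorem lt_rank (h : RankGE 𝓛 M A β) (h𝓛 : IsUniform ξ 𝓛 M) (hM : M.Infinite)
    (hA : A.Nonempty) : β < ξ :=
  let ⟨_, _, _, hres, hu, hβγ⟩ := h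
  hβγ.trans_lt ((hres.rank_le h𝓛 hu (hres.ground_infinite hM)).2 hA)

theorem exists_insert (h : RankGE 𝓛 M A (β + 1)) {N : Set ℕ} (hN : N ⊆ M) (hNinf : N.Infinite)
    (n : ℕ) : ∃ x ∈ N, n < x ∧ RankGE 𝓛 M (insert x A) β := by
  obtain ⟨𝓡, M', γ, hres, hu, hβγ⟩ := h
  obtain ⟨a, ha⟩ := hres.exists_inter_Ioi_subset
  have hNM' : (N ∩ M').Infinite :=
    (hNinf.inter_Ioi a).mono fun x hx => ⟨hx.1, ha ⟨hN hx.1, hx.2⟩⟩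
  obtain ⟨x, ⟨hxN, hxM'⟩, hnx, δ, hβδ, hδ⟩ :=
    hu.exists_famAt_ge (Order.add_one_le_iff.1 hβγ) inter_subset_right hNM' n
  exact ⟨x, hxN, hnx, _, _, δ, hres.snoc hxM', hδ, hβδ⟩

/-- Cutting a path of `B` at `n` leaves a residual of rank `>` that of the residual of `B`. -/
theorem succ_of_filter {B : Finset ℕ} (h : RankGE 𝓛 M B β) (h𝓛 : IsUniform ξ 𝓛 M)
    (hM : M.Infinite) {n : ℕ} (hA : B.filter (· < n) = A) (hB : ∃ b ∈ B, n ≤ b) :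
    RankGE 𝓛 M A (β + 1) := by
  obtain ⟨𝓡, M'', γ, hres, hu, hβγ⟩ := h
  obtain ⟨𝓢, M₀, h₁, h₂⟩ := hres.split n
  rw [hA] at h₁
  have hM'' := hres.ground_infinite hM
  obtain ⟨s, hs, -⟩ := h₂.mem_famSub (hu.nonempty hM'')
  obtain ⟨τ, -, h𝓢, -⟩ := h₁.exists_isUniform h𝓛 ⟨s, hs⟩
  obtain ⟨b, hb, hnb⟩ := hB
  have hγτ := (h₂.rank_le h𝓢 hu hM'').2 ⟨b, Finset.mem_filter.2 ⟨hb, hnb⟩⟩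
  exact ⟨𝓢, M₀, τ, h₁, h𝓢, Order.add_one_le_of_lt (hβγ.trans_lt hγτ)⟩

end RankGE

section

variable {ξ β : Ordinal.{0}} {𝓛 : Set (Finset ℕ)} {M : Set ℕ} {A : Finset ℕ}

theorem rankGE_zero_of_mem_famSub (h𝓛 : IsUniform ξ 𝓛 M) (hA : A ∈ famSub 𝓛) :
    RankGE 𝓛 M A 0 := by
  induction ξ using WellFoundedLT.induction generalizing 𝓛 M A with
  | _ ξ ih =>
    obtain ⟨s, hs, hAs⟩ := hA
    rcases s.eq_empty_or_nonempty with rfl | hsne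
    · rw [Finset.subset_empty.1 hAs]
      exact ⟨𝓛, M, ξ, .refl 𝓛 M, h𝓛, zero_le⟩
    set m := s.min' hsne
    have hs' : s.erase m ∈ famAt 𝓛 m :=
      ⟨by rw [Finset.insert_erase (s.min'_mem hsne)]; exact hs,
        fun a ha => s.min'_lt_of_mem_erase_min' hsne ha⟩
    have hmM : m ∈ M := h𝓛.subset hs (s.min'_mem hsne)
    obtain ⟨δ, hδ, hchild⟩ := h𝓛.famAt_isUniform hmM ⟨_, hs'⟩
    obtain ⟨𝓡, M', γ, hres, hu, -⟩ := ih δ hδ hchild ⟨_, hs', Finset.erase_subset_erase m hAs⟩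
    exact ⟨𝓡, M', γ, .step m hmM (fun a ha => s.min'_le a (hAs ha)) hres, hu, zero_le⟩

theorem rankGE_zero_iff (h𝓛 : IsUniform ξ 𝓛 M) (hM : M.Infinite) :
    RankGE 𝓛 M A 0 ↔ A ∈ famSub 𝓛 :=
  ⟨fun h => h.mem_famSub hM, rankGE_zero_of_mem_famSub h𝓛⟩

theorem rankGE_empty_iff (h𝓛 : IsUniform ξ 𝓛 M) (hM : M.Infinite) :
    RankGE 𝓛 M ∅ β ↔ β ≤ ξ :=
  ⟨fun h => h.le_rank h𝓛 hM, fun h => ⟨𝓛, M, ξ, .refl 𝓛 M, h𝓛, h⟩⟩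

/-- A path through a nonempty `A` starts at one of the finitely many `m ≤ min A`; by pigeonhole,
one of them serves all `γ < β`. -/
theorem rankGE_of_forall_lt (h𝓛 : IsUniform ξ 𝓛 M) (hM : M.Infinite)
    (hβ : Order.IsSuccLimit β) (h : ∀ γ < β, RankGE 𝓛 M A γ) : RankGE 𝓛 M A β := by
  induction ξ using WellFoundedLT.induction generalizing 𝓛 M A with
  | _ ξ ih =>
    rcases A.eq_empty_or_nonempty with rfl | hA
    · refine (rankGE_empty_iff h𝓛 hM).2 (le_of_forall_lt fun γ hγ => ?_)
      exact Order.add_one_le_iff.1 ((h (γ + 1) (hβ.add_one_lt hγ)).le_rank h𝓛 hM)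
    have hstart : ∀ γ < β, ∃ m ∈ Finset.range (A.min' hA + 1),
        m ∈ M ∧ RankGE (famAt 𝓛 m) (M ∩ Ioi m) (A.erase m) γ := fun γ hγ => by
      obtain ⟨𝓡, M', δ, hres, hu, hγδ⟩ := h γ hγ
      cases hres with
      | refl => exact absurd hA Finset.not_nonempty_empty
      | step m hm hle hres =>
        exact ⟨m, Finset.mem_range_succ_iff.2 (hle _ (A.min'_mem hA)), hm, _, _, _, hres, hu, hγδ⟩
    obtain ⟨m, hmS, hm⟩ := exists_mem_forall_lt_of_antitone
      (fun _ _ _ hle hP => ⟨hP.1, hP.2.mono hle⟩) hβ.bot_lt hstart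
    obtain ⟨hmM, hm0⟩ := hm 0 hβ.bot_lt
    obtain ⟨s, hs, -⟩ := hm0.mem_famSub (hM.inter_Ioi m)
    obtain ⟨δ, hδ, hchild⟩ := h𝓛.famAt_isUniform hmM ⟨s, hs⟩
    obtain ⟨𝓡, M', γ, hres, hu, hβγ⟩ :=
      ih δ hδ hchild (hM.inter_Ioi m) fun γ hγ => (hm γ hγ).2
    have hle : ∀ a ∈ A, m ≤ a := fun a ha =>
      (Finset.mem_range_succ_iff.1 hmS).trans (A.min'_le a ha)
    exact ⟨𝓡, M', γ, .step m hmM hle hres, hu, hβγ⟩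

end

section Derivatives

variable {ξ β : Ordinal.{0}} {𝓛 : Set (Finset ℕ)} {M L : Set ℕ}

theorem CBDeriv_zero (F : Set (Finset ℕ)) (L : Set ℕ) : CBDeriv F L 0 = F :=
  Ordinal.limitRecOn_zero _ _ _

theorem CBDeriv_add_one (F : Set (Finset ℕ)) (L : Set ℕ) (o : Ordinal.{0}) :
    CBDeriv F L (o + 1) = derivOne L (CBDeriv F L o) :=
  Ordinal.limitRecOn_add_one _ _ _ _

theorem CBDeriv_limit (F : Set (Finset ℕ)) (L : Set ℕ) {o : Ordinal.{0}}
    (ho : Order.IsSuccLimit o) : CBDeriv F L o = ⋂ (β : Ordinal.{0}) (_ : β < o), CBDeriv F L β :=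
  Ordinal.limitRecOn_limit _ _ _ _ ho

theorem derivOne_eq_setOf_rankGE (h𝓛 : IsUniform ξ 𝓛 M) (hLM : L ⊆ M) (hL : L.Infinite)
    {G : Set (Finset ℕ)} (hG : ∀ B : Finset ℕ, ↑B ⊆ L → (B ∈ G ↔ RankGE 𝓛 M B β)) :
    derivOne L G = {A | ↑A ⊆ L ∧ RankGE 𝓛 M A (β + 1)} := by
  have hM := hL.mono hLM
  ext A
  constructor
  · rintro ⟨-, hAL, hacc⟩
    obtain ⟨n, hn⟩ := A.exists_nat_subset_range
    obtain ⟨B, ⟨hBG, hBAL⟩, hBA, hagree⟩ := accPt_toChar_iff.1 (hacc L subset_rfl hL) n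
    have hBL : ↑B ⊆ L := fun b hb => (hBAL hb).elim (fun h => hAL h) id
    have hfilter : B.filter (· < n) = A := by
      ext i
      simp only [Finset.mem_filter]
      exact ⟨fun ⟨hi, hin⟩ => (hagree i hin).1 hi,
        fun hi => ⟨(hagree i (Finset.mem_range.1 (hn hi))).2 hi, Finset.mem_range.1 (hn hi)⟩⟩
    refine ⟨hAL, ((hG B hBL).1 hBG).succ_of_filter h𝓛 hM hfilter ?_⟩
    by_contra! hlt
    exact hBA (by rw [← hfilter, Finset.filter_true_of_mem hlt])
  · rintro ⟨hAL, hA⟩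
    refine ⟨(hG A hAL).2 (hA.mono le_self_add), hAL, fun N hNL hN => ?_⟩
    refine accPt_toChar_iff.2 fun n => ?_
    obtain ⟨k, hk⟩ := A.exists_nat_subset_range
    obtain ⟨x, hxN, hx, hxA⟩ := hA.exists_insert (hNL.trans hLM) hN (max n k)
    have hxA' : x ∉ A := fun h => by
      have := Finset.mem_range.1 (hk h)
      omega
    refine ⟨insert x A, ⟨(hG _ ?_).2 hxA, ?_⟩, Finset.insert_ne_self.2 hxA', fun i hi => ?_⟩
    · rw [Finset.coe_insert]
      exact insert_subset (hNL hxN) hAL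
    · rw [Finset.coe_insert]
      exact insert_subset (Or.inr hxN) subset_union_left
    · rw [Finset.mem_insert]
      exact ⟨fun h => h.resolve_left (by omega), Or.inr⟩

theorem mem_CBDeriv_famSub_iff (h𝓛 : IsUniform ξ 𝓛 M) (hLM : L ⊆ M) (hL : L.Infinite)
    (β : Ordinal.{0}) (A : Finset ℕ) :
    A ∈ CBDeriv (famSub 𝓛) L β ↔ RankGE 𝓛 M A β ∧ (β = 0 ∨ ↑A ⊆ L) := by
  have hM := hL.mono hLM
  induction β using Ordinal.limitRecOn generalizing A with
  | zero => simp [CBDeriv_zero, rankGE_zero_iff h𝓛 hM]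
  | add_one β ih =>
    rw [CBDeriv_add_one, derivOne_eq_setOf_rankGE h𝓛 hLM hL (β := β) fun B hB => by simp [ih, hB]]
    simp [and_comm]
  | limit β hβ ih =>
    rw [CBDeriv_limit _ _ hβ]
    have hβ0 : β ≠ 0 := hβ.ne_bot
    simp only [mem_iInter, hβ0, false_or]
    refine ⟨fun h => ?_, fun ⟨hA, hAL⟩ γ hγ => (ih γ hγ A).2 ⟨hA.mono hγ.le, Or.inr hAL⟩⟩
    refine ⟨rankGE_of_forall_lt h𝓛 hM hβ fun γ hγ => ((ih γ hγ A).1 (h γ hγ)).1, ?_⟩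
    have h1 := Ordinal.one_lt_of_isSuccLimit hβ
    exact ((ih 1 h1 A).1 (h 1 h1)).2.resolve_left one_ne_zero

end Derivatives

theorem uniform_index_general (ξ : Ordinal.{0}) (M : Set ℕ) (𝓛 : Set (Finset ℕ)) (h𝓛 : IsUniform ξ 𝓛 M) :
    ∀ L : Set ℕ, L ⊆ M → L.Infinite →
      CBDeriv (famSub 𝓛) L ξ = {(∅ : Finset ℕ)} ∧
        CBIndex (famSub 𝓛) L = ξ + 1 := by
  intro L hLM hL
  have hM := hL.mono hLM
  have hmem := mem_CBDeriv_famSub_iff h𝓛 hLM hL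
  have hempty : ∀ β, ∅ ∈ CBDeriv (famSub 𝓛) L β ↔ β ≤ ξ := fun β => by
    simp [hmem, rankGE_empty_iff h𝓛 hM]
  have htop : CBDeriv (famSub 𝓛) L (ξ + 1) = ∅ :=
    eq_empty_of_forall_notMem fun A hA =>
      (lt_add_one ξ).not_ge (((hmem _ A).1 hA).1.le_rank h𝓛 hM)
  refine ⟨eq_singleton_iff_unique_mem.2 ⟨(hempty ξ).2 le_rfl, fun A hA => ?_⟩, ?_⟩
  · exact Finset.not_nonempty_iff_eq_empty.1 fun hne =>
      lt_irrefl ξ (((hmem ξ A).1 hA).1.lt_rank h𝓛 hM hne)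
  · refine le_antisymm (csInf_le' htop) (le_csInf ⟨_, htop⟩ fun o ho => ?_)
    by_contra! hlt
    simpa [show CBDeriv (famSub 𝓛) L o = ∅ from ho] using
      (hempty o).2 (Order.lt_add_one_iff.1 hlt)

/-- **Theorem 1.18.** If `ℒ` is a `ξ`-uniform family on `M`, then for every
infinite `L ⊆ M` we have `(ℒ_*)^ξ_L = {∅}` and `s_L(ℒ_*) = ξ + 1`. -/
theorem uniform_index (ξ : Ordinal.{0}) (hξ : ξ.card ≤ Cardinal.aleph0)
    (M : Set ℕ) (hM : M.Infinite)
    (𝓛 : Set (Finset ℕ)) (h𝓛 : IsUniform ξ 𝓛 M) :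
    ∀ L : Set ℕ, L ⊆ M → L.Infinite →
      CBDeriv (famSub 𝓛) L ξ = {(∅ : Finset ℕ)} ∧
        CBIndex (famSub 𝓛) L = ξ + 1 :=
  uniform_index_general ξ M 𝓛 h𝓛
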